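/- arXiv:0910.4597 — 6 statements merged into one kernel-verified Lean document; each statement's English description precedes it below -/
import Mathlib

section
/- Let R be a Noetherian ring of prime characteristic p and let I ⊆ R be an ideal. Then the tight closure of I is contained in the integral closure of I. -/
/-- The `q`-th Frobenius power of an ideal: the ideal generated by `q`-th powers of elements. -/
def frobPow {R : Type*} [CommRing R] (I : Ideal R) (q : ℕ) : Ideal R :=
  Ideal.span ((fun a => a ^ q) '' (I : Set R))

/-- `R°`: the complement of the union of the minimal primes of `R`. -/
def Rzero (R : Type*) [CommRing R] : Set R :=
  {c | ∀ P ∈ minimalPrimes R, c ∉ P}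

/-- The tight closure of an ideal, as a set. -/
def tightCl {R : Type*} [CommRing R] (p : ℕ) (I : Ideal R) : Set R :=
  {x | ∃ c ∈ Rzero R, ∃ e₀ : ℕ, ∀ e, e₀ ≤ e → c * x ^ p ^ e ∈ frobPow I (p ^ e)}

/-!
If `c x^q ∈ I^[q] ⊆ I^q` for all large `q = p^e`, the elements `c x^q t^q` lie in the Rees algebra
`R[It]`, which is Noetherian; so one of them is an `R[It]`-combination of the earlier ones.
Comparing coefficients of `t^Q` gives `c f(x) = 0` with `f = X^Q - ∑ d_i X^(q_i)`, `d_i ∈ I^(Q - q_i)`.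
As `c` avoids every minimal prime, `f(x)` is nilpotent, and a power of `f` is an equation of
integral dependence of `x` on `I`.
-/

open Polynomial

section

variable {R : Type*} [CommRing R] {I : Ideal R}

def IsIntegralOverIdeal (I : Ideal R) (x : R) : Prop :=
  ∃ n : ℕ, 0 < n ∧ ∃ a : ℕ → R,
    (∀ i ∈ Finset.Icc 1 n, a i ∈ I ^ i) ∧ x ^ n + ∑ i ∈ Finset.Icc 1 n, a i * x ^ (n - i) = 0

/-- `f = X ^ n + f_{n-1} X ^ (n-1) + ⋯ + f_0` with `f_j ∈ I ^ (n - j)`. The degree `n` is part of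
the data rather than `f.natDegree`, so that the notion also makes sense over the zero ring. -/
structure IsIntegralDependencePoly (I : Ideal R) (n : ℕ) (f : R[X]) : Prop where
  natDegree_le : f.natDegree ≤ n
  coeff_eq_one : f.coeff n = 1
  coeff_mem : ∀ j, f.coeff j ∈ I ^ (n - j)

theorem coeff_mul_mem_pow_sub {f g : R[X]} {n m : ℕ} (hf : ∀ j, f.coeff j ∈ I ^ (n - j))
    (hg : ∀ j, g.coeff j ∈ I ^ (m - j)) (k : ℕ) : (f * g).coeff k ∈ I ^ (n + m - k) := by
  rw [coeff_mul]
  refine Ideal.sum_mem _ fun ij hij => ?_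
  rw [Finset.HasAntidiagonal.mem_antidiagonal] at hij
  refine Ideal.pow_le_pow_right (show n + m - k ≤ (n - ij.1) + (m - ij.2) by omega) ?_
  rw [pow_add]
  exact Ideal.mul_mem_mul (hf ij.1) (hg ij.2)

namespace IsIntegralDependencePoly

theorem one : IsIntegralDependencePoly I 0 (1 : R[X]) where
  natDegree_le := natDegree_one.le
  coeff_eq_one := coeff_one_zero
  coeff_mem j := by simp

theorem mul {n m : ℕ} {f g : R[X]} (hf : IsIntegralDependencePoly I n f)
    (hg : IsIntegralDependencePoly I m g) : IsIntegralDependencePoly I (n + m) (f * g) where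
  natDegree_le := natDegree_mul_le.trans (add_le_add hf.natDegree_le hg.natDegree_le)
  coeff_eq_one := by
    rw [coeff_mul_add_eq_of_natDegree_le hf.natDegree_le hg.natDegree_le, hf.coeff_eq_one,
      hg.coeff_eq_one, one_mul]
  coeff_mem := coeff_mul_mem_pow_sub hf.coeff_mem hg.coeff_mem

theorem pow {n : ℕ} {f : R[X]} (hf : IsIntegralDependencePoly I n f) (k : ℕ) :
    IsIntegralDependencePoly I (k * n) (f ^ k) := by
  induction k with
  | zero => simpa using one
  | succ k ih => simpa [pow_succ, Nat.succ_mul] using ih.mul hf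

theorem isIntegralOverIdeal {n : ℕ} {f : R[X]} {x : R} (hf : IsIntegralDependencePoly I n f)
    (hn : 0 < n) (hx : f.eval x = 0) : IsIntegralOverIdeal I x := by
  refine ⟨n, hn, fun i => f.coeff (n - i), fun i hi => ?_, ?_⟩
  · simpa [Nat.sub_sub_self (Finset.mem_Icc.mp hi).2] using hf.coeff_mem (n - i)
  · rw [← hx, eval_eq_sum_range' (Nat.lt_succ_of_le hf.natDegree_le), Finset.sum_range_succ,
      hf.coeff_eq_one, one_mul, add_comm, ← Finset.Ico_add_one_right_eq_Icc,
      Finset.sum_Ico_reflect (fun j => f.coeff j * x ^ j) 1 le_rfl, Nat.add_sub_cancel,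
      Finset.range_eq_Ico]
    simp

theorem X_pow_sub_sum {Q k : ℕ} {q : Fin k → ℕ} {d : Fin k → R} (hq : ∀ i, q i < Q)
    (hd : ∀ i, d i ∈ I ^ (Q - q i)) :
    IsIntegralDependencePoly I Q (X ^ Q - ∑ i, C (d i) * X ^ q i) := by
  have hcoeff : ∀ j, (X ^ Q - ∑ i, C (d i) * X ^ q i : R[X]).coeff j =
      (if j = Q then 1 else 0) - ∑ i, if j = q i then d i else 0 := by
    intro j
    simp [coeff_X_pow, coeff_C_mul]
  have hsum_zero : ∀ j, Q ≤ j → ∑ i, (if j = q i then d i else 0) = 0 := fun j hj =>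
    Finset.sum_eq_zero fun i _ => if_neg ((hq i).trans_le hj).ne'
  refine ⟨natDegree_le_iff_coeff_eq_zero.mpr fun j hj => ?_, ?_, fun j => ?_⟩
  · rw [hcoeff, if_neg hj.ne', hsum_zero j hj.le, sub_zero]
  · rw [hcoeff, if_pos rfl, hsum_zero Q le_rfl, sub_zero]
  · rw [hcoeff]
    refine sub_mem ?_ (Ideal.sum_mem _ fun i _ => ?_)
    · split_ifs with hj
      · simp [hj]
      · exact zero_mem _
    · split_ifs with hj
      · exact hj ▸ hd i
      · exact zero_mem _

end IsIntegralDependencePoly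

theorem exists_mem_span_range_fin {A : Type*} [CommRing A] [IsNoetherianRing A] (g : ℕ → A) :
    ∃ k, g k ∈ Ideal.span (Set.range fun i : Fin k => g i) := by
  let J : ℕ →o Ideal A := ⟨fun k => Ideal.span (Set.range fun i : Fin k => g i), fun k l hkl =>
    Ideal.span_mono (Set.range_subset_iff.mpr fun i => ⟨⟨i, i.2.trans_le hkl⟩, rfl⟩)⟩
  obtain ⟨k, hk⟩ := monotone_stabilizes_iff_noetherian.mpr inferInstance J
  refine ⟨k, ?_⟩
  change g k ∈ J k
  rw [hk (k + 1) k.le_succ]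
  exact Ideal.subset_span ⟨⟨k, k.lt_succ_self⟩, rfl⟩

theorem exists_isIntegralDependencePoly_mul_eval_eq_zero [IsNoetherianRing R] {c x : R} {s : ℕ → ℕ} (hs : StrictMono s)
    (h : ∀ i, c * x ^ s i ∈ I ^ s i) :
    ∃ k, ∃ f : R[X], IsIntegralDependencePoly I (s k) f ∧ c * f.eval x = 0 := by
  let g : ℕ → reesAlgebra I := fun i =>
    ⟨monomial (s i) (c * x ^ s i), reesAlgebra.monomial_mem.mpr (h i)⟩
  obtain ⟨k, hk⟩ := exists_mem_span_range_fin g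
  obtain ⟨w, hw⟩ := Ideal.mem_span_range_iff_exists_fun.mp hk
  set d : Fin k → R := fun i => (w i : R[X]).coeff (s k - s i)
  have hlt : ∀ i : Fin k, s i < s k := fun i => hs i.2
  have hrel : c * x ^ s k = ∑ i, d i * (c * x ^ s i) := by
    have := congrArg (fun f : reesAlgebra I => (f : R[X]).coeff (s k)) hw
    simp only [g, AddSubmonoidClass.coe_finsetSum, MulMemClass.coe_mul, finsetSum_coeff,
      coeff_monomial_same] at this
    rw [← this]
    refine Finset.sum_congr rfl fun i _ => ?_
    rw [← Nat.sub_add_cancel (hlt i).le, coeff_mul_monomial]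
  refine ⟨k, _, IsIntegralDependencePoly.X_pow_sub_sum hlt fun i => (w i).2 _, ?_⟩
  rw [eval_sub, eval_pow, eval_X, eval_finsetSum, mul_sub, hrel, Finset.mul_sum, sub_eq_zero]
  refine Finset.sum_congr rfl fun i _ => ?_
  rw [eval_mul, eval_C, eval_pow, eval_X, mul_left_comm]

theorem isNilpotent_of_mem_Rzero_of_mul_eq_zero {c z : R}
    (hc : c ∈ Rzero R) (h : c * z = 0) : IsNilpotent z := by
  rw [← mem_nilradical, nilradical, ← Ideal.sInf_minimalPrimes, Submodule.mem_sInf]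
  intro P hP
  exact ((hP.1.1.mem_or_mem (h ▸ P.zero_mem)).resolve_left (hc P hP))

theorem frobPow_le_pow (I : Ideal R) (q : ℕ) : frobPow I q ≤ I ^ q :=
  Ideal.span_le.mpr <| Set.image_subset_iff.mpr fun _ ha => Ideal.pow_mem_pow ha q

end

theorem stmt2_general {R : Type*} [CommRing R] [IsNoetherianRing R] (p : ℕ) (hp : p.Prime)
    (I : Ideal R) :
    tightCl p I ⊆ {x : R | ∃ n : ℕ, 0 < n ∧ ∃ a : ℕ → R,
      (∀ i ∈ Finset.Icc 1 n, a i ∈ I ^ i) ∧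
      x ^ n + ∑ i ∈ Finset.Icc 1 n, a i * x ^ (n - i) = 0} := by
  rintro x ⟨c, hc, e₀, hce⟩
  have hs : StrictMono fun i => p ^ (e₀ + i) :=
    (pow_right_strictMono₀ hp.one_lt).comp (strictMono_id.const_add e₀)
  obtain ⟨k, f, hf, hcf⟩ := exists_isIntegralDependencePoly_mul_eval_eq_zero hs
    fun i => frobPow_le_pow I _ (hce _ (Nat.le_add_right e₀ i))
  obtain ⟨m, hm⟩ := isNilpotent_of_mem_Rzero_of_mul_eq_zero hc hcf
  exact (hf.pow (m + 1)).isIntegralOverIdeal (Nat.mul_pos m.succ_pos (pow_pos hp.pos _))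
    (by rw [eval_pow, pow_succ, hm, zero_mul])

/-- tight closure is contained in the integral closure of an ideal. -/
theorem stmt2 {R : Type*} [CommRing R] [IsNoetherianRing R] (p : ℕ) (hp : p.Prime)
    [CharP R p] (I : Ideal R) :
    tightCl p I ⊆ {x : R | ∃ n : ℕ, 0 < n ∧ ∃ a : ℕ → R,
      (∀ i ∈ Finset.Icc 1 n, a i ∈ I ^ i) ∧
      x ^ n + ∑ i ∈ Finset.Icc 1 n, a i * x ^ (n - i) = 0} :=
  stmt2_general p hp I
end

section
/- Let (R, m) be a Noetherian local ring and τ an m-primary ideal containing a non-zerodivisor d. Then there exists j such that (τ^j : τ) ⊆ m·τ. -/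
/-- for an `m`-primary ideal `τ` containing a non-zerodivisor in a
Noetherian local ring, `(τ^j : τ) ⊆ m·τ` for some `j`. -/
theorem stmt3 {R : Type*} [CommRing R] [IsNoetherianRing R] [IsLocalRing R]
    (τ : Ideal R) (d : R) (hd : d ∈ τ) (hdnzd : d ∈ nonZeroDivisors R)
    (hprim : τ.radical = IsLocalRing.maximalIdeal R) :
    ∃ j : ℕ, ∀ r : R, (∀ x ∈ τ, r * x ∈ τ ^ j) → r ∈ IsLocalRing.maximalIdeal R * τ := by
  -- Artin–Rees with N = (d)
  obtain ⟨k, hk⟩ := Ideal.exists_pow_inf_eq_pow_smul τ (Ideal.span {d})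
  refine ⟨k + 2, fun r hr => ?_⟩
  have hτm : τ ≤ IsLocalRing.maximalIdeal R := hprim ▸ Ideal.le_radical
  -- r * d ∈ τ^(k+2) ⊓ (d)
  have h1 : r * d ∈ τ ^ (k + 2) • (⊤ : Submodule R R) ⊓ Ideal.span {d} := by
    constructor
    · rw [smul_eq_mul, Ideal.mul_top]
      exact hr d hd
    · exact Ideal.mem_span_singleton'.mpr ⟨r, rfl⟩
  rw [hk (k + 2) (by omega)] at h1
  have h2 : r * d ∈ τ ^ (k + 2 - k) * Ideal.span {d} := by
    have := Ideal.mul_mono_right (I := τ ^ (k + 2 - k))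
      (inf_le_right : τ ^ k • (⊤ : Submodule R R) ⊓ Ideal.span {d} ≤ Ideal.span {d})
    exact this (by simpa [smul_eq_mul] using h1)
  rw [show k + 2 - k = 2 by omega] at h2
  obtain ⟨z, hz, hzd⟩ := Ideal.mem_mul_span_singleton.mp h2
  have hrz : r = z := by
    have : d * r = d * z := by rw [mul_comm d r, mul_comm d z, hzd]
    exact (mul_cancel_left_mem_nonZeroDivisors hdnzd).mp this.symm |>.symm
  have : r ∈ τ * τ := by rw [hrz]; simpa [sq] using hz
  exact Ideal.mul_mono_left hτm this
end

section
/- Let R = k[x, y, z]/(x^5 + y^5 + z^5) with k a field of characteristic p ∉ {0, 5}, let J = (y, z) and u = x^2, I = J + (u). Then J(J : I) is not contained in the ideal (y + x^2, z). -/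
open MvPolynomial in
/-- in `R = k[x,y,z]/(x^5+y^5+z^5)`, char `k = p ∉ {0,5}`, with `J = (y,z)`
and `I = (y, z, x²)`, the ideal `J·(J : I)` is not contained in `(y + x², z)`. -/
theorem stmt6 {k : Type*} [Field k] (p : ℕ) (hp : p.Prime) [CharP k p] (hp5 : p ≠ 5)
    {R : Type*} [CommRing R] (φ : MvPolynomial (Fin 3) k →+* R)
    (hsurj : Function.Surjective φ)
    (hker : RingHom.ker φ =
      Ideal.span {(X 0 : MvPolynomial (Fin 3) k) ^ 5 + X 1 ^ 5 + X 2 ^ 5}) :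
    ¬ (Ideal.span {φ (X 1), φ (X 2)} *
        (Ideal.span {φ (X 1), φ (X 2)}).colon
          (Ideal.span {φ (X 1), φ (X 2), φ (X 0) ^ 2}) ≤
      Ideal.span {φ (X 1) + φ (X 0) ^ 2, φ (X 2)}) := by
  intro hle
  -- the defining relation holds in R
  have hF : φ (X 0) ^ 5 + φ (X 1) ^ 5 + φ (X 2) ^ 5 = 0 := by
    have h : ((X 0 : MvPolynomial (Fin 3) k) ^ 5 + X 1 ^ 5 + X 2 ^ 5) ∈ RingHom.ker φ := by
      rw [hker]; exact Ideal.subset_span rfl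
    simpa [RingHom.mem_ker] using h
  -- x^5 ∈ J
  have hx5 : φ (X 0) ^ 5 ∈ Ideal.span {φ (X 1), φ (X 2)} := by
    rw [Ideal.mem_span_pair]
    exact ⟨-(φ (X 1)) ^ 4, -(φ (X 2)) ^ 4, by linear_combination -hF⟩
  -- x^3 ∈ (J : I)
  have hcolon : φ (X 0) ^ 3 ∈ (Ideal.span {φ (X 1), φ (X 2)}).colon
      (Ideal.span {φ (X 1), φ (X 2), φ (X 0) ^ 2}) := by
    rw [Submodule.mem_colon]
    intro q hq
    rw [smul_eq_mul]
    have hmul : Ideal.span {φ (X 1), φ (X 2), φ (X 0) ^ 2} * Ideal.span {φ (X 0) ^ 3} ≤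
        Ideal.span {φ (X 1), φ (X 2)} := by
      rw [Ideal.span_mul_span']
      rw [Ideal.span_le]
      rintro r hr
      simp only [Set.mem_mul, Set.mem_insert_iff, Set.mem_singleton_iff] at hr
      obtain ⟨a, ha, b, hb, rfl⟩ := hr
      subst hb
      rcases ha with rfl | rfl | rfl
      · exact Ideal.mul_mem_right _ _ (Ideal.subset_span (by simp))
      · exact Ideal.mul_mem_right _ _ (Ideal.subset_span (by simp))
      · have : φ (X 0) ^ 2 * φ (X 0) ^ 3 = φ (X 0) ^ 5 := by ring
        rw [this]; exact hx5
    have h2 : q * φ (X 0) ^ 3 ∈ Ideal.span {φ (X 1), φ (X 2), φ (X 0) ^ 2} *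
        Ideal.span {φ (X 0) ^ 3} :=
      Ideal.mul_mem_mul hq (Ideal.mem_span_singleton_self _)
    rw [mul_comm q (φ (X 0) ^ 3)] at h2
    exact hmul h2
  -- the witness y * x^3 lies in J * (J : I)
  have hmem : φ (X 1) * φ (X 0) ^ 3 ∈ Ideal.span {φ (X 1), φ (X 2)} *
      (Ideal.span {φ (X 1), φ (X 2)}).colon
        (Ideal.span {φ (X 1), φ (X 2), φ (X 0) ^ 2}) :=
    Ideal.mul_mem_mul (Ideal.subset_span (by simp)) hcolon
  -- so y * x^3 ∈ (y + x², z)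
  have hP := hle hmem
  rw [Ideal.mem_span_pair] at hP
  obtain ⟨a, b, hab⟩ := hP
  obtain ⟨A, rfl⟩ := hsurj a
  obtain ⟨B, rfl⟩ := hsurj b
  -- lift the relation to the polynomial ring
  have hk : (A * (X 1 + X 0 ^ 2) + B * X 2 - X 1 * X 0 ^ 3 : MvPolynomial (Fin 3) k)
      ∈ RingHom.ker φ := by
    rw [RingHom.mem_ker]
    simp only [map_sub, map_add, map_mul, map_pow]
    rw [hab]
    ring
  rw [hker, Ideal.mem_span_singleton] at hk
  obtain ⟨C, hC⟩ := hk
  -- evaluate at (1, -1, 0)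
  have := congrArg (MvPolynomial.eval (![1, -1, 0] : Fin 3 → k)) hC
  simp [MvPolynomial.eval_mul, MvPolynomial.eval_add, MvPolynomial.eval_sub] at this
  norm_num at this
end

section
/- Let R be a Noetherian local ring, x_1, …, x_d a regular sequence, t ≥ 2, J = (x_1^t, x_2^t, x_3, …, x_d), and suppose I = J + (x_1 x_2)^{t-1}·(u_1', …, u_s') for some u_i' ∈ R. Then I² ⊆ J·I; that is, the reduction number r_J(I) is at most 1. -/
/-- `x 0, …, x (d-1)` is a regular sequence: the ideal it generates is proper and each
`x i` is a non-zerodivisor modulo the ideal generated by the previous ones. -/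
def IsRegSeq {R : Type*} [CommRing R] {d : ℕ} (x : Fin d → R) : Prop :=
  Ideal.span (Set.range x) ≠ ⊤ ∧
    ∀ i : Fin d, ∀ r : R,
      r * x i ∈ Ideal.span (x '' Set.Iio i) → r ∈ Ideal.span (x '' Set.Iio i)

/-- A Noetherian local ring is Cohen–Macaulay iff it admits a system of parameters
(of length equal to its Krull dimension, inside the maximal ideal) that is a regular
sequence. -/
def IsCohenMacaulayLocalRing (R : Type*) [CommRing R] [IsLocalRing R] : Prop :=
  ∃ (d : ℕ) (x : Fin d → R), (∀ i, x i ∈ IsLocalRing.maximalIdeal R) ∧ IsRegSeq x ∧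
    (d : WithBot (WithTop ℕ)) = ringKrullDim R

/-- with `J = (x_1^t, x_2^t, x_3, …, x_d)`, `t ≥ 2`, and
`I = J + (x_1 x_2)^{t-1}·(u_1', …, u_s')`, one has `I² ⊆ J·I`, i.e. `r_J(I) ≤ 1`. -/
theorem stmt8 {R : Type*} [CommRing R] [IsNoetherianRing R] [IsLocalRing R]
    {d : ℕ} (hd : 2 ≤ d) (x : Fin d → R) (hreg : IsRegSeq x)
    (t : ℕ) (ht : 2 ≤ t) {s : ℕ} (u : Fin s → R) (J I : Ideal R)
    (hJ : J = Ideal.span (Set.range fun j : Fin d => if (j : ℕ) < 2 then x j ^ t else x j))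
    (hI : I = J ⊔ Ideal.span (Set.range fun i : Fin s =>
      (x ⟨0, by omega⟩ * x ⟨1, by omega⟩) ^ (t - 1) * u i)) :
    I * I ≤ J * I := by
  set c : R := x ⟨0, by omega⟩ * x ⟨1, by omega⟩ with hc
  set K : Ideal R := Ideal.span (Set.range fun i : Fin s => c ^ (t - 1) * u i) with hK
  have h0 : x ⟨0, by omega⟩ ^ t ∈ J := by
    rw [hJ]
    refine Ideal.subset_span ⟨⟨0, by omega⟩, ?_⟩
    simp
  have h1 : x ⟨1, by omega⟩ ^ t ∈ J := by
    rw [hJ]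
    refine Ideal.subset_span ⟨⟨1, by omega⟩, ?_⟩
    simp
  have hKP : K ≤ Ideal.span {c ^ (t - 1)} := by
    rw [hK, Ideal.span_le]
    rintro _ ⟨i, rfl⟩
    exact Ideal.mem_span_singleton.2 ⟨u i, rfl⟩
  have hcJJ : c ^ (t - 1) * c ^ (t - 1) ∈ J * J := by
    obtain ⟨k, rfl⟩ : ∃ k, t = k + 2 := ⟨t - 2, by omega⟩
    have : c ^ (k + 2 - 1) * c ^ (k + 2 - 1) =
        x ⟨0, by omega⟩ ^ (k + 2) * (x ⟨1, by omega⟩ ^ (k + 2) * c ^ k) := by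
      have hk : k + 2 - 1 = k + 1 := rfl
      rw [hk, hc]; ring
    rw [this]
    exact Ideal.mul_mem_mul h0 (Ideal.mul_mem_right _ _ h1)
  have hKK : K * K ≤ J * J := by
    calc K * K ≤ Ideal.span {c ^ (t - 1)} * Ideal.span {c ^ (t - 1)} :=
          Ideal.mul_mono hKP hKP
      _ = Ideal.span {c ^ (t - 1) * c ^ (t - 1)} :=
          Ideal.span_singleton_mul_span_singleton _ _
      _ ≤ J * J := (Ideal.span_singleton_le_iff_mem _).2 hcJJ
  have hJle : J ≤ I := hI ▸ le_sup_left
  have hKle : K ≤ I := hI ▸ le_sup_right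
  have hIJK : I = J ⊔ K := hI
  rw [hIJK, Ideal.sup_mul, Ideal.mul_sup, Ideal.mul_sup]
  refine sup_le (sup_le ?_ ?_) (sup_le ?_ ?_)
  · exact le_sup_left
  · exact le_sup_right
  · rw [mul_comm K J]; exact le_sup_right
  · exact le_trans hKK le_sup_left
end

section
/- Let R = k[x, y, z]/(x^10 + y^10 + z^10) with k a field of characteristic p ∉ {0, 2, 5}. Let J = (x^5, y^7, z^8) and u = x y^3 z^6, I = J + (u). Then (J : I) = (x^4, y^4, z^2) and z^2·u ∉ J·(J : I). -/
/-!
Lift everything to `S = k[x, y, z]`. There `J`, `(x⁴, y⁴, z²)` and `(x², y⁴, z⁹)` are monomial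
ideals, membership in a monomial ideal is decided exponent by exponent, and each of them contains
`f = x¹⁰ + y¹⁰ + z¹⁰`, so it is the full preimage of its image in `R = S/(f)`. The colon ideal is
then the monomial computation `(x⁵, y⁷, z⁸) : x y³ z⁶ = (x⁴, y⁴, z²)`, and `z² u ∉ J (J : I)`
because `(x², y⁴, z⁹)` contains `(x⁵, y⁷, z⁸)(x⁴, y⁴, z²)` but not `x y³ z⁸`.
-/

open MvPolynomial Finsupp
open scoped Pointwise

namespace MvPolynomial

variable {σ R : Type*} [CommSemiring R]

noncomputable def monomialIdeal (s : Set (σ →₀ ℕ)) : Ideal (MvPolynomial σ R) :=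
  Ideal.span ((fun e ↦ monomial e 1) '' s)

theorem mem_monomialIdeal {s : Set (σ →₀ ℕ)} {p : MvPolynomial σ R} :
    p ∈ monomialIdeal s ↔ ∀ d ∈ p.support, ∃ e ∈ s, e ≤ d :=
  mem_ideal_span_monomial_image

theorem monomial_mem_monomialIdeal [Nontrivial R] {s : Set (σ →₀ ℕ)} {d : σ →₀ ℕ} :
    (monomial d 1 : MvPolynomial σ R) ∈ monomialIdeal s ↔ ∃ e ∈ s, e ≤ d := by
  classical
  simp [mem_monomialIdeal, support_monomial]

theorem monomial_mem_monomialIdeal_of_le {s : Set (σ →₀ ℕ)} {d e : σ →₀ ℕ} (he : e ∈ s)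
    (hed : e ≤ d) : (monomial d 1 : MvPolynomial σ R) ∈ monomialIdeal s := by
  classical
  refine mem_monomialIdeal.2 fun d' hd' ↦ ⟨e, he, ?_⟩
  rwa [Finset.mem_singleton.1 (support_monomial_subset hd')]

theorem monomialIdeal_le_monomialIdeal {s t : Set (σ →₀ ℕ)} (h : ∀ d ∈ s, ∃ e ∈ t, e ≤ d) :
    (monomialIdeal s : Ideal (MvPolynomial σ R)) ≤ monomialIdeal t := by
  rw [monomialIdeal, Ideal.span_le]
  rintro _ ⟨d, hd, rfl⟩
  obtain ⟨e, he, hed⟩ := h d hd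
  exact monomial_mem_monomialIdeal_of_le he hed

theorem monomialIdeal_mul (s t : Set (σ →₀ ℕ)) :
    (monomialIdeal s * monomialIdeal t : Ideal (MvPolynomial σ R)) = monomialIdeal (s + t) := by
  rw [monomialIdeal, monomialIdeal, Ideal.span_mul_span', monomialIdeal]
  congr 1
  ext p
  simp only [Set.mem_mul, Set.mem_image, Set.mem_add]
  constructor
  · rintro ⟨_, ⟨a, ha, rfl⟩, _, ⟨b, hb, rfl⟩, rfl⟩
    exact ⟨a + b, ⟨a, ha, b, hb, rfl⟩, by rw [monomial_mul, one_mul]⟩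
  · rintro ⟨_, ⟨a, ha, b, hb, rfl⟩, rfl⟩
    exact ⟨_, ⟨a, ha, rfl⟩, _, ⟨b, hb, rfl⟩, by rw [monomial_mul, one_mul]⟩

theorem mul_monomial_mem_monomialIdeal_iff {s t : Set (σ →₀ ℕ)} {a : σ →₀ ℕ}
    (h : ∀ d, (∃ e ∈ s, e ≤ d + a) ↔ ∃ e ∈ t, e ≤ d) {p : MvPolynomial σ R} :
    p * monomial a 1 ∈ monomialIdeal s ↔ p ∈ monomialIdeal t := by
  simp only [mem_monomialIdeal, mem_support_iff]
  constructor
  · intro hp d hd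
    exact (h d).1 (hp (d + a) (by rwa [coeff_mul_monomial, mul_one]))
  · intro hp d hd
    rw [coeff_mul_monomial'] at hd
    split_ifs at hd with had
    · rw [mul_one] at hd
      simpa only [tsub_add_cancel_of_le had] using (h (d - a)).2 (hp _ hd)
    · exact absurd rfl hd

theorem map_monomialIdeal_three {S : Type*} [CommSemiring S] (φ : MvPolynomial σ R →+* S)
    (i j l : σ) (a b c : ℕ) :
    (monomialIdeal {single i a, single j b, single l c}).map φ =
      Ideal.span {φ (X i) ^ a, φ (X j) ^ b, φ (X l) ^ c} := by
  simp only [monomialIdeal, Ideal.map_span, Set.image_insert_eq, Set.image_singleton,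
    ← X_pow_eq_monomial, map_pow]

end MvPolynomial

theorem Ideal.apply_mem_map_iff_of_ker_le {R S : Type*} [Ring R] [Ring S] {f : R →+* S}
    (hf : Function.Surjective f) {I : Ideal R} (h : RingHom.ker f ≤ I) {x : R} :
    f x ∈ I.map f ↔ x ∈ I := by
  rw [← Ideal.mem_comap, Ideal.comap_map_of_surjective' f hf, sup_eq_left.2 h]

theorem Ideal.mem_colon_sup_span_singleton {R : Type*} [CommRing R] {J : Ideal R} {u r : R} :
    r ∈ J.colon (J ⊔ Ideal.span {u} : Ideal R) ↔ r * u ∈ J := by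
  rw [← Ideal.span_eq J, ← Ideal.span_union, Ideal.span_eq, Ideal.colon_span,
    Submodule.colon_union, (Submodule.colon_eq_top_iff_subset _).2 subset_rfl, top_inf_eq,
    Submodule.mem_colon_singleton, smul_eq_mul]

open MvPolynomial in
theorem stmt11_general {k : Type*} [Field k]
    {R : Type*} [CommRing R] (φ : MvPolynomial (Fin 3) k →+* R)
    (hsurj : Function.Surjective φ)
    (hker : RingHom.ker φ =
      Ideal.span {(X 0 : MvPolynomial (Fin 3) k) ^ 10 + X 1 ^ 10 + X 2 ^ 10})
    (J I : Ideal R) (u : R)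
    (hJ : J = Ideal.span {φ (X 0) ^ 5, φ (X 1) ^ 7, φ (X 2) ^ 8})
    (hu : u = φ (X 0) * φ (X 1) ^ 3 * φ (X 2) ^ 6)
    (hI : I = J ⊔ Ideal.span {u}) :
    J.colon I = Ideal.span {φ (X 0) ^ 4, φ (X 1) ^ 4, φ (X 2) ^ 2} ∧
      φ (X 2) ^ 2 * u ∉ J * J.colon I := by
  have map_monomial (a b c : ℕ) : φ (monomial (single 0 a + single 1 b + single 2 c) 1) =
      φ (X 0) ^ a * φ (X 1) ^ b * φ (X 2) ^ c := by
    simp only [← map_pow, ← map_mul, X_pow_eq_monomial, monomial_mul, one_mul]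
  have ker_le (s : Set (Fin 3 →₀ ℕ)) (hs : ∀ i, ∃ e ∈ s, e ≤ single i 10) :
      RingHom.ker φ ≤ monomialIdeal s := by
    rw [hker, Ideal.span_le, Set.singleton_subset_iff]
    simp only [X_pow_eq_monomial, SetLike.mem_coe]
    refine add_mem (add_mem ?_ ?_) ?_ <;>
      obtain ⟨e, he, hle⟩ := hs _ <;> exact monomial_mem_monomialIdeal_of_le he hle
  have hu' : u = φ (monomial (single 0 1 + single 1 3 + single 2 6) 1) := by
    rw [hu, map_monomial, pow_one]
  have hcolon : J.colon I = (monomialIdeal {single 0 4, single 1 4, single 2 2}).map φ := by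
    ext r
    obtain ⟨P, rfl⟩ := hsurj r
    rw [hI, Ideal.mem_colon_sup_span_singleton, hu', ← map_mul, hJ, ← map_monomialIdeal_three,
      Ideal.apply_mem_map_iff_of_ker_le hsurj, Ideal.apply_mem_map_iff_of_ker_le hsurj,
      mul_monomial_mem_monomialIdeal_iff]
    · intro d
      simp [single_le_iff]
    all_goals
      refine ker_le _ fun i ↦ ?_
      fin_cases i <;> simp [single_le_iff]
  refine ⟨by rw [hcolon, map_monomialIdeal_three], fun hmem ↦ ?_⟩
  have hzu : φ (X 2) ^ 2 * u = φ (monomial (single 0 1 + single 1 3 + single 2 8) 1) := by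
    rw [hu, map_monomial]; ring
  rw [hcolon, hJ, ← map_monomialIdeal_three, ← Ideal.map_mul, monomialIdeal_mul, hzu] at hmem
  have hN := Ideal.map_mono (f := φ) (monomialIdeal_le_monomialIdeal
    (t := {single 0 2, single 1 4, single 2 9}) ?_) hmem
  · rw [Ideal.apply_mem_map_iff_of_ker_le hsurj, monomial_mem_monomialIdeal] at hN
    · simp [single_le_iff] at hN
    refine ker_le _ fun i ↦ ?_
    fin_cases i <;> simp [single_le_iff]
  rintro _ ⟨a, ha, b, hb, rfl⟩
  simp only [Set.mem_insert_iff, Set.mem_singleton_iff] at ha hb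
  rcases ha with rfl | rfl | rfl <;> rcases hb with rfl | rfl | rfl <;> simp [single_le_iff]

open MvPolynomial in
/-- in `R = k[x,y,z]/(x^10+y^10+z^10)`, char `k = p ∉ {0,2,5}`, with
`J = (x^5, y^7, z^8)`, `u = x y³ z⁶`, `I = J + (u)`: `(J : I) = (x⁴, y⁴, z²)` and
`z²·u ∉ J·(J : I)`. -/
theorem stmt11 {k : Type*} [Field k] (p : ℕ) (hp : p.Prime) [CharP k p]
    (hp2 : p ≠ 2) (hp5 : p ≠ 5)
    {R : Type*} [CommRing R] (φ : MvPolynomial (Fin 3) k →+* R)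
    (hsurj : Function.Surjective φ)
    (hker : RingHom.ker φ =
      Ideal.span {(X 0 : MvPolynomial (Fin 3) k) ^ 10 + X 1 ^ 10 + X 2 ^ 10})
    (J I : Ideal R) (u : R)
    (hJ : J = Ideal.span {φ (X 0) ^ 5, φ (X 1) ^ 7, φ (X 2) ^ 8})
    (hu : u = φ (X 0) * φ (X 1) ^ 3 * φ (X 2) ^ 6)
    (hI : I = J ⊔ Ideal.span {u}) :
    J.colon I = Ideal.span {φ (X 0) ^ 4, φ (X 1) ^ 4, φ (X 2) ^ 2} ∧
      φ (X 2) ^ 2 * u ∉ J * J.colon I :=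
  stmt11_general φ hsurj hker J I u hJ hu hI
end

section
/- Let R = k[x, y, z]/(x^10 + y^10 + z^10) with k of characteristic p ∉ {0, 2, 5}, J = (x^5, y^7, z^8), u = x y^3 z^6, and J' = (x^5 + x u, y^7 + y u, z^8 + z u). Then x^5 z^2 ∈ J·(J : (J + (u))) but x^5 z^2 ∉ J'. -/
/-!
For the membership, `x⁵ ∈ J` and `z² u = x y³ z⁸ ∈ J`, so `z² ∈ J : (J + (u))`.

For the non-membership, lift to `k[x, y, z]`: it suffices that `x⁵ z²` is not in the ideal
generated by the Fermat form `F = x¹⁰ + y¹⁰ + z¹⁰` and the lifts `Gᵢ` of the generators of `J'`.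
The artinian ring `k[x, y, z] / (x¹⁰, y¹⁰, z¹⁰)` has one-dimensional socle spanned by
`x⁹ y⁹ z⁹`. The polynomial `L = certificate k`, a solution of the linear system expressing that
`F L` and every `Gᵢ L` lie in `(x¹⁰, y¹⁰, z¹⁰)`, satisfies `x⁵ z² L ≡ x⁹ y⁹ z⁹`, which is nonzero
modulo that ideal; so `L` separates `x⁵ z²` from `(F, G₁, G₂, G₃)`.
-/

open MvPolynomial

theorem Ideal.colon_sup_span_singleton {R : Type*} [CommRing R] (J : Ideal R) (u : R) :
    J.colon ↑(J ⊔ Ideal.span {u}) = J.colon {u} := by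
  rw [show J ⊔ Ideal.span {u} = Ideal.span (↑J ∪ {u}) by rw [Ideal.span_union, Ideal.span_eq],
    Ideal.colon_span, Submodule.colon_union,
    (Submodule.colon_eq_top_iff_subset (N := J) _).mpr subset_rfl, top_inf_eq]

theorem Ideal.comap_span_image_of_surjective {A B : Type*} [CommRing A] [CommRing B]
    {φ : A →+* B} (hφ : Function.Surjective φ) (s : Set A) :
    (Ideal.span (φ '' s)).comap φ = Ideal.span s ⊔ RingHom.ker φ := by
  rw [← Ideal.map_span, Ideal.comap_map_of_surjective φ hφ]
  rfl

theorem Ideal.notMem_span_of_mul_mem {R : Type*} [CommSemiring R] {M : Ideal R} {s : Set R}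
    {L a : R} (hs : ∀ g ∈ s, g * L ∈ M) (ha : a * L ∉ M) : a ∉ Ideal.span s := fun h =>
  ha <| Submodule.mem_colon_singleton.mp <|
    Ideal.span_le.mpr (fun g hg => Submodule.mem_colon_singleton.mpr (hs g hg)) h

theorem MvPolynomial.monomial_one_notMem_span_X_pow {σ R : Type*} [CommSemiring R]
    [Nontrivial R]
    {n : ℕ} {m : σ →₀ ℕ} (hm : ∀ i, m i < n) :
    monomial m (1 : R) ∉ Ideal.span (Set.range fun i => (X i : MvPolynomial σ R) ^ n) := by
  have hrange : (Set.range fun i => (X i : MvPolynomial σ R) ^ n) =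
      (fun s => monomial s 1) '' Set.range fun i => Finsupp.single i n := by
    rw [← Set.range_comp]; simp [Function.comp_def, X_pow_eq_monomial]
  rw [hrange, mem_ideal_span_monomial_image]
  push Not
  refine ⟨m, by classical simp [coeff_monomial], ?_⟩
  rintro _ ⟨i, rfl⟩ h
  exact (hm i).not_ge (by simpa using h i)

namespace FermatDecic

noncomputable section

variable (k : Type*) [CommRing k]

def monomialIdeal : Ideal (MvPolynomial (Fin 3) k) :=
  Ideal.span (Set.range fun i => X i ^ 10)

def liftedGenerators : Set (MvPolynomial (Fin 3) k) :=
  {X 0 ^ 5 + X 0 ^ 2 * X 1 ^ 3 * X 2 ^ 6, X 1 ^ 7 + X 0 * X 1 ^ 4 * X 2 ^ 6,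
    X 2 ^ 8 + X 0 * X 1 ^ 3 * X 2 ^ 7}

def certificate : MvPolynomial (Fin 3) k :=
  X 0 ^ 6 * X 1 ^ 3 * X 2 ^ 2 + X 0 ^ 4 * X 1 ^ 9 * X 2 ^ 7 + X 0 ^ 8 * X 1 ^ 9
    - X 0 ^ 3 * X 1 ^ 6 * X 2 ^ 8 - X 0 ^ 7 * X 2 ^ 8 - X 0 ^ 7 * X 1 ^ 6 * X 2

variable {k}

theorem mem_monomialIdeal {f : MvPolynomial (Fin 3) k} (a b c : MvPolynomial (Fin 3) k)
    (h : f = a * X 0 ^ 10 + b * X 1 ^ 10 + c * X 2 ^ 10) : f ∈ monomialIdeal k :=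
  Ideal.mem_span_range_iff_exists_fun.mpr ⟨![a, b, c], by simp [Fin.sum_univ_three, h]⟩

theorem socle_notMem_monomialIdeal [Nontrivial k] :
    (X 0 ^ 9 * X 1 ^ 9 * X 2 ^ 9 : MvPolynomial (Fin 3) k) ∉ monomialIdeal k := by
  have h := monomial_one_notMem_span_X_pow (R := k) (n := 10)
    (m := Finsupp.single (0 : Fin 3) 9 + Finsupp.single 1 9 + Finsupp.single 2 9)
    (by intro i; fin_cases i <;> simp)
  rw [monomialIdeal]
  simpa [X_pow_eq_monomial, monomial_mul] using h

theorem generator_mul_certificate_mem :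
    ∀ g ∈ insert (X 0 ^ 10 + X 1 ^ 10 + X 2 ^ 10) (liftedGenerators k),
      g * certificate k ∈ monomialIdeal k := by
  rintro g (rfl | rfl | rfl | rfl)
  · exact mem_monomialIdeal (certificate k) (certificate k) (certificate k) (by ring)
  · exact mem_monomialIdeal
      (X 0 * X 1 ^ 3 * X 2 ^ 2 - X 0 ^ 2 * X 2 ^ 8 - X 0 ^ 2 * X 1 ^ 6 * X 2
        + X 0 ^ 3 * X 1 ^ 9 + X 1 ^ 12 * X 2 ^ 6)
      (X 0 ^ 6 * X 1 ^ 2 * X 2 ^ 13)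
      (-(X 0 ^ 5 * X 1 ^ 9 * X 2 ^ 4) - X 0 ^ 9 * X 1 ^ 3 * X 2 ^ 4)
      (by unfold certificate; ring)
  · exact mem_monomialIdeal 0
      (-(X 0 ^ 3 * X 1 ^ 3 * X 2 ^ 8) - X 0 ^ 4 * X 2 ^ 14 + X 0 ^ 4 * X 1 ^ 6 * X 2 ^ 7
        + X 0 ^ 5 * X 1 ^ 3 * X 2 ^ 13 + X 0 ^ 6 * X 2 ^ 2 - X 0 ^ 7 * X 1 ^ 3 * X 2
        - X 0 ^ 8 * X 2 ^ 7 + X 0 ^ 8 * X 1 ^ 6 + X 0 ^ 9 * X 1 ^ 3 * X 2 ^ 6)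
      (-(X 0 ^ 8 * X 1 ^ 4 * X 2 ^ 4)) (by unfold certificate; ring)
  · exact mem_monomialIdeal 0
      (X 0 ^ 5 * X 1 ^ 2 * X 2 ^ 14 + X 0 ^ 9 * X 1 ^ 2 * X 2 ^ 7)
      (-(X 0 ^ 3 * X 1 ^ 6 * X 2 ^ 6) + X 0 ^ 6 * X 1 ^ 3 - X 0 ^ 7 * X 2 ^ 6
        - X 0 ^ 8 * X 1 ^ 3 * X 2 ^ 5) (by unfold certificate; ring)

theorem mul_certificate_notMem [Nontrivial k] :
    (X 0 ^ 5 * X 2 ^ 2 : MvPolynomial (Fin 3) k) * certificate k ∉ monomialIdeal k := by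
  intro h
  have hrest : X 0 ^ 5 * X 2 ^ 2 * certificate k - X 0 ^ 9 * X 1 ^ 9 * X 2 ^ 9 ∈
      monomialIdeal k :=
    mem_monomialIdeal
      (X 0 * X 1 ^ 3 * X 2 ^ 4 - X 0 ^ 2 * X 2 ^ 10 - X 0 ^ 2 * X 1 ^ 6 * X 2 ^ 3
        + X 0 ^ 3 * X 1 ^ 9 * X 2 ^ 2) 0 (-(X 0 ^ 8 * X 1 ^ 6)) (by unfold certificate; ring)
  exact socle_notMem_monomialIdeal (by simpa using Ideal.sub_mem _ h hrest)

theorem notMem_span_liftedGenerators [Nontrivial k] :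
    (X 0 ^ 5 * X 2 ^ 2 : MvPolynomial (Fin 3) k) ∉
      Ideal.span (insert (X 0 ^ 10 + X 1 ^ 10 + X 2 ^ 10) (liftedGenerators k)) :=
  Ideal.notMem_span_of_mul_mem generator_mul_certificate_mem mul_certificate_notMem

end

end FermatDecic

open MvPolynomial in
theorem stmt12_general {k : Type*} [Field k]
    {R : Type*} [CommRing R] (φ : MvPolynomial (Fin 3) k →+* R)
    (hsurj : Function.Surjective φ)
    (hker : RingHom.ker φ =
      Ideal.span {(X 0 : MvPolynomial (Fin 3) k) ^ 10 + X 1 ^ 10 + X 2 ^ 10})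
    (J I J' : Ideal R) (u : R)
    (hJ : J = Ideal.span {φ (X 0) ^ 5, φ (X 1) ^ 7, φ (X 2) ^ 8})
    (hu : u = φ (X 0) * φ (X 1) ^ 3 * φ (X 2) ^ 6)
    (hI : I = J ⊔ Ideal.span {u})
    (hJ' : J' = Ideal.span {φ (X 0) ^ 5 + φ (X 0) * u, φ (X 1) ^ 7 + φ (X 1) * u,
      φ (X 2) ^ 8 + φ (X 2) * u}) :
    φ (X 0) ^ 5 * φ (X 2) ^ 2 ∈ J * J.colon I ∧ φ (X 0) ^ 5 * φ (X 2) ^ 2 ∉ J' := by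
  constructor
  · have hz8 : φ (X 2) ^ 8 ∈ J := hJ ▸ Ideal.subset_span (by simp)
    have hz2 : φ (X 2) ^ 2 ∈ J.colon I := by
      rw [hI, Ideal.colon_sup_span_singleton, Submodule.mem_colon_singleton, smul_eq_mul,
        show φ (X 2) ^ 2 * u = φ (X 0) * φ (X 1) ^ 3 * φ (X 2) ^ 8 by rw [hu]; ring]
      exact Ideal.mul_mem_left _ _ hz8
    exact Ideal.mul_mem_mul (hJ ▸ Ideal.subset_span (by simp)) hz2
  · have hJ'_eq : J' = Ideal.span (φ '' FermatDecic.liftedGenerators k) := by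
      simp only [hJ', hu, FermatDecic.liftedGenerators, Set.image_insert_eq, Set.image_singleton,
        map_add, map_mul, map_pow]
      ring_nf
    intro hmem
    have hlift :
        X 0 ^ 5 * X 2 ^ 2 ∈ (Ideal.span (φ '' FermatDecic.liftedGenerators k)).comap φ := by
      simpa [hJ'_eq] using hmem
    rw [Ideal.comap_span_image_of_surjective hsurj, hker, ← Ideal.span_union,
      Set.union_singleton] at hlift
    exact FermatDecic.notMem_span_liftedGenerators hlift

open MvPolynomial in
/-- in `R = k[x,y,z]/(x^10+y^10+z^10)`, char `k = p ∉ {0,2,5}`, with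
`J = (x^5, y^7, z^8)`, `u = x y³ z⁶`, `I = J + (u)` and
`J' = (x^5 + xu, y^7 + yu, z^8 + zu)`: `x^5 z² ∈ J·(J : I)` but `x^5 z² ∉ J'`. -/
theorem stmt12 {k : Type*} [Field k] (p : ℕ) (hp : p.Prime) [CharP k p]
    (hp2 : p ≠ 2) (hp5 : p ≠ 5)
    {R : Type*} [CommRing R] (φ : MvPolynomial (Fin 3) k →+* R)
    (hsurj : Function.Surjective φ)
    (hker : RingHom.ker φ =
      Ideal.span {(X 0 : MvPolynomial (Fin 3) k) ^ 10 + X 1 ^ 10 + X 2 ^ 10})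
    (J I J' : Ideal R) (u : R)
    (hJ : J = Ideal.span {φ (X 0) ^ 5, φ (X 1) ^ 7, φ (X 2) ^ 8})
    (hu : u = φ (X 0) * φ (X 1) ^ 3 * φ (X 2) ^ 6)
    (hI : I = J ⊔ Ideal.span {u})
    (hJ' : J' = Ideal.span {φ (X 0) ^ 5 + φ (X 0) * u, φ (X 1) ^ 7 + φ (X 1) * u,
      φ (X 2) ^ 8 + φ (X 2) * u}) :
    φ (X 0) ^ 5 * φ (X 2) ^ 2 ∈ J * J.colon I ∧ φ (X 0) ^ 5 * φ (X 2) ^ 2 ∉ J' :=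
  stmt12_general φ hsurj hker J I J' u hJ hu hI hJ'
end
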